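/- arXiv:2409.14528 — 2 statements merged into one kernel-verified Lean document; each statement's English description precedes it below -/
import Mathlib

section
/- Let G be a digraph such that the pair M_G = (E(G), Mult(G)) is a matroid. Then the circuits of M_G (its minimal dependent sets) are exactly the edge sets of subgraphs of G that are linear sinks, linear sources, or coherently oriented cycles (including loops). -/
set_option autoImplicit false

noncomputable section

attribute [local instance] Classical.propDecidable

/-- A (finite) directed multigraph: finitely many vertices and edges, each edge
has a source and a target.  (Loops and, a priori, parallel edges are allowed;
the paper's convention of at most one edge between an ordered pair of distinct
vertices is imposed via `DiGraph.EdgeUnique`.) -/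
structure DiGraph where
  V : Type
  E : Type
  [fintV : Fintype V]
  [decV : DecidableEq V]
  [fintE : Fintype E]
  [decE : DecidableEq E]
  s : E → V
  t : E → V

attribute [instance] DiGraph.fintV DiGraph.decV DiGraph.fintE DiGraph.decE

namespace DiGraph

/-- For each ordered pair of *distinct* vertices there is at most one edge. -/
def EdgeUnique (G : DiGraph) : Prop :=
  ∀ e f : G.E, G.s e = G.s f → G.t e = G.t f → G.s e ≠ G.t e → e = f

/-- G has no loops. -/
def Loopless (G : DiGraph) : Prop := ∀ e : G.E, G.s e ≠ G.t e

/-- A coherently oriented cycle, given as the (cyclically ordered) list of its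
edges: the list is nonempty, has no repeated edges, visits no vertex twice,
and the target of each edge is the source of the next one (cyclically).
A loop is a coherently oriented cycle of length 1. -/
def IsCohCycle (G : DiGraph) (c : List G.E) : Prop :=
  c ≠ [] ∧ c.Nodup ∧ (c.map G.s).Nodup ∧
    ∀ i : Fin c.length,
      G.t (c.get i) =
        G.s (c.get ⟨(i.val + 1) % c.length,
          Nat.mod_lt _ (Nat.lt_of_le_of_lt (Nat.zero_le _) i.isLt)⟩)

/-- `m` is (the edge set of) a multipath of `G`: the corresponding spanning
subgraph has no loops, in-degree and out-degree at most one at each vertex, and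
contains no coherently oriented cycle; equivalently, every connected component
is a single vertex or a simple (directed) path. -/
def IsMultipath (G : DiGraph) (m : Finset G.E) : Prop :=
  (∀ e ∈ m, G.s e ≠ G.t e) ∧
  (∀ e ∈ m, ∀ f ∈ m, G.s e = G.s f → e = f) ∧
  (∀ e ∈ m, ∀ f ∈ m, G.t e = G.t f → e = f) ∧
  ¬∃ c : List G.E, IsCohCycle G c ∧ ∀ g ∈ c, g ∈ m

/-- The forbidden pattern (A): vertices v0,v1,v2 and edges (v1,v0), (v0,v2), (v1,v2). -/
def HasPatternA (G : DiGraph) : Prop :=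
  ∃ v0 v1 v2 : G.V, v0 ≠ v1 ∧ v0 ≠ v2 ∧ v1 ≠ v2 ∧
    (∃ e : G.E, G.s e = v1 ∧ G.t e = v0) ∧
    (∃ e : G.E, G.s e = v0 ∧ G.t e = v2) ∧
    (∃ e : G.E, G.s e = v1 ∧ G.t e = v2)

/-- The reverse of pattern (A). -/
def HasPatternArev (G : DiGraph) : Prop :=
  ∃ v0 v1 v2 : G.V, v0 ≠ v1 ∧ v0 ≠ v2 ∧ v1 ≠ v2 ∧
    (∃ e : G.E, G.s e = v0 ∧ G.t e = v1) ∧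
    (∃ e : G.E, G.s e = v2 ∧ G.t e = v0) ∧
    (∃ e : G.E, G.s e = v2 ∧ G.t e = v1)

/-- The forbidden pattern (B): vertices v0,v1,v2,v3 and edges (v0,v1), (v2,v1), (v2,v3). -/
def HasPatternB (G : DiGraph) : Prop :=
  ∃ v0 v1 v2 v3 : G.V,
    v0 ≠ v1 ∧ v0 ≠ v2 ∧ v0 ≠ v3 ∧ v1 ≠ v2 ∧ v1 ≠ v3 ∧ v2 ≠ v3 ∧
    (∃ e : G.E, G.s e = v0 ∧ G.t e = v1) ∧
    (∃ e : G.E, G.s e = v2 ∧ G.t e = v1) ∧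
    (∃ e : G.E, G.s e = v2 ∧ G.t e = v3)

/-- The reverse of pattern (B). -/
def HasPatternBrev (G : DiGraph) : Prop :=
  ∃ v0 v1 v2 v3 : G.V,
    v0 ≠ v1 ∧ v0 ≠ v2 ∧ v0 ≠ v3 ∧ v1 ≠ v2 ∧ v1 ≠ v3 ∧ v2 ≠ v3 ∧
    (∃ e : G.E, G.s e = v1 ∧ G.t e = v0) ∧
    (∃ e : G.E, G.s e = v1 ∧ G.t e = v2) ∧
    (∃ e : G.E, G.s e = v3 ∧ G.t e = v2)

/-- (MP1): G contains no copy, up to reversing all orientations, of the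
patterns (A) and (B). -/
def MP1 (G : DiGraph) : Prop :=
  ¬HasPatternA G ∧ ¬HasPatternArev G ∧ ¬HasPatternB G ∧ ¬HasPatternBrev G

/-- (MP2): every coherently oriented cycle of length ≥ 2 (i.e. loops excluded)
is a connected component: any edge incident to a vertex of the cycle belongs
to the cycle. -/
def MP2 (G : DiGraph) : Prop :=
  ∀ c : List G.E, IsCohCycle G c → 2 ≤ c.length →
    ∀ f : G.E, (∃ g ∈ c, G.s g = G.s f ∨ G.s g = G.t f) → f ∈ c

def IsMPDigraph (G : DiGraph) : Prop := MP1 G ∧ MP2 G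

/-- The axioms (I1), (I2), (I3) for a family of independent sets of a matroid. -/
def IsIndepFamily {α : Type} [DecidableEq α] (I : Finset α → Prop) : Prop :=
  I ∅ ∧ (∀ A B : Finset α, I A → B ⊆ A → I B) ∧
    ∀ A B : Finset α, I A → I B → B.card < A.card →
      ∃ x ∈ A, x ∉ B ∧ I (insert x B)

/-- `m` is the edge set of a linear sink (two non-loop edges with a common
target and distinct sources). -/
def IsLinearSinkSet (G : DiGraph) (m : Finset G.E) : Prop :=
  ∃ e1 e2 : G.E, e1 ≠ e2 ∧ m = {e1, e2} ∧ G.t e1 = G.t e2 ∧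
    G.s e1 ≠ G.s e2 ∧ G.s e1 ≠ G.t e1 ∧ G.s e2 ≠ G.t e2

/-- `m` is the edge set of a linear source (two non-loop edges with a common
source and distinct targets). -/
def IsLinearSourceSet (G : DiGraph) (m : Finset G.E) : Prop :=
  ∃ e1 e2 : G.E, e1 ≠ e2 ∧ m = {e1, e2} ∧ G.s e1 = G.s e2 ∧
    G.t e1 ≠ G.t e2 ∧ G.s e1 ≠ G.t e1 ∧ G.s e2 ≠ G.t e2

/-- `m` is the edge set of a coherently oriented cycle (possibly a loop). -/
def IsCohCycleSet (G : DiGraph) (m : Finset G.E) : Prop :=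
  ∃ c : List G.E, IsCohCycle G c ∧ m = c.toFinset

/-- Two vertices are adjacent if they are the endpoints of a common edge. -/
def adj (G : DiGraph) (v w : G.V) : Prop :=
  ∃ e : G.E, (G.s e = v ∧ G.t e = w) ∨ (G.s e = w ∧ G.t e = v)

/-- Two vertices lie in the same connected component. -/
def connRel (G : DiGraph) : G.V → G.V → Prop := Relation.EqvGen (adj G)

/-- G is connected. -/
def ConnectedD (G : DiGraph) : Prop := Nonempty G.V ∧ ∀ v w : G.V, connRel G v w

/-- The number of connected components of G (isolated vertices count). -/
def numComponents (G : DiGraph) : ℕ :=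
  Nat.card (Quotient (Relation.EqvGen.setoid (adj G)))

/-- `S` is the set of edges of one of the connected components of `G`. -/
def IsComponentEdges (G : DiGraph) (S : Finset G.E) : Prop :=
  ∃ v : G.V, S = Finset.univ.filter (fun e => connRel G v (G.s e))

/-- in-degree of `v` in the subgraph spanned by the edges of `R`. -/
def indegIn (G : DiGraph) (R : Finset G.E) (v : G.V) : ℕ :=
  (R.filter (fun e => G.t e = v)).card

/-- out-degree of `v` in the subgraph spanned by the edges of `R`. -/
def outdegIn (G : DiGraph) (R : Finset G.E) (v : G.V) : ℕ :=
  (R.filter (fun e => G.s e = v)).card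

def indeg (G : DiGraph) (v : G.V) : ℕ := indegIn G Finset.univ v
def outdeg (G : DiGraph) (v : G.V) : ℕ := outdegIn G Finset.univ v

/-- `v` is a vertex of the subgraph spanned by the edge set `R`. -/
def IncidentTo (G : DiGraph) (R : Finset G.E) (v : G.V) : Prop :=
  ∃ e ∈ R, G.s e = v ∨ G.t e = v

/-- `v` is stable in the subgraph spanned by `R`. -/
def StableIn (G : DiGraph) (R : Finset G.E) (v : G.V) : Prop :=
  indegIn G R v = 0 ∨ outdegIn G R v = 0

/-- `v` is unstable in `G`. -/
def UnstableG (G : DiGraph) (v : G.V) : Prop :=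
  0 < indeg G v ∧ 0 < outdeg G v

/-- adjacency within the subgraph spanned by `R`. -/
def adjIn (G : DiGraph) (R : Finset G.E) (a b : G.V) : Prop :=
  ∃ g ∈ R, (G.s g = a ∧ G.t g = b) ∨ (G.s g = b ∧ G.t g = a)

/-- The subgraph spanned by the edge set `R` is connected. -/
def EdgeConnected (G : DiGraph) (R : Finset G.E) : Prop :=
  ∀ e ∈ R, ∀ f ∈ R, Relation.EqvGen (adjIn G R) (G.s e) (G.s f)

/-- `R` spans a dynamical region of `G`: it is connected, has at least one
edge, every boundary vertex is unstable in `G` but stable in `R` and in its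
complement, and no edge of `R` lies on an oriented cycle of `G` not contained
in `R`. -/
def IsDynRegion (G : DiGraph) (R : Finset G.E) : Prop :=
  R.Nonempty ∧ EdgeConnected G R ∧
  (∀ v : G.V, IncidentTo G R v → IncidentTo G (Finset.univ \ R) v →
     UnstableG G v ∧ StableIn G R v ∧ StableIn G (Finset.univ \ R) v) ∧
  (∀ c : List G.E, IsCohCycle G c → (∃ g ∈ c, g ∈ R) → ∀ g ∈ c, g ∈ R)

/-- A dynamical module is a minimal dynamical region. -/
def IsDynModule (G : DiGraph) (R : Finset G.E) : Prop :=
  IsDynRegion G R ∧ ∀ R' ⊆ R, IsDynRegion G R' → R' = R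

/-- `G` is a sink on `n+1` vertices. -/
def IsSinkGraph (G : DiGraph) : Prop :=
  Loopless G ∧ Fintype.card G.V = Fintype.card G.E + 1 ∧
    ∃! v : G.V, ∀ e : G.E, G.t e = v

/-- `G` is a source on `n+1` vertices. -/
def IsSourceGraph (G : DiGraph) : Prop :=
  Loopless G ∧ Fintype.card G.V = Fintype.card G.E + 1 ∧
    ∃! v : G.V, ∀ e : G.E, G.s e = v

/-- `R` spans a sink: all its edges are non-loops with a common target and
pairwise distinct sources. -/
def IsSinkSet (G : DiGraph) (R : Finset G.E) : Prop :=
  ∃ v : G.V, (∀ e ∈ R, G.t e = v ∧ G.s e ≠ v) ∧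
    ∀ e ∈ R, ∀ f ∈ R, G.s e = G.s f → e = f

/-- `R` spans a source. -/
def IsSourceSet (G : DiGraph) (R : Finset G.E) : Prop :=
  ∃ v : G.V, (∀ e ∈ R, G.s e = v ∧ G.t e ≠ v) ∧
    ∀ e ∈ R, ∀ f ∈ R, G.t e = G.t f → e = f

/-- The whole digraph `G` is a coherently oriented cycle. -/
def IsCohCycleGraph (G : DiGraph) : Prop :=
  ∃ c : List G.E, IsCohCycle G c ∧ (∀ e : G.E, e ∈ c) ∧
    ∀ v : G.V, ∃ g ∈ c, G.s g = v

/-- Rank function of the multipath matroid: the size of a largest multipath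
contained in `A`. -/
def mrank (G : DiGraph) (A : Finset G.E) : ℕ :=
  (A.powerset.filter (fun m => IsMultipath G m)).sup Finset.card

/-- The Tutte polynomial of the multipath matroid of `G`, evaluated at `(x,y)`. -/
def tutte (G : DiGraph) (x y : ℤ) : ℤ :=
  ∑ A : Finset G.E,
    (x - 1) ^ (mrank G Finset.univ - mrank G A) *
      (y - 1) ^ (A.card - mrank G A)

/-- `e` is a loop of the multipath matroid. -/
def IsMatroidLoop (G : DiGraph) (e : G.E) : Prop := ¬IsMultipath G {e}

/-- `e` is a coloop of the multipath matroid: it belongs to every maximal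
independent set. -/
def IsColoop (G : DiGraph) (e : G.E) : Prop :=
  ∀ m : Finset G.E, IsMultipath G m →
    (∀ m' : Finset G.E, IsMultipath G m' → m ⊆ m' → m' = m) → e ∈ m

/-- The digraph obtained from `G` by deleting the edge `e`. -/
def deleteEdge (G : DiGraph) (e : G.E) : DiGraph where
  V := G.V
  E := {f : G.E // f ≠ e}
  s := fun f => G.s f.val
  t := fun f => G.t f.val

/-- The vertex set of the MP-contraction `G ⫽ e`: the vertices of `G` other
than the endpoints of `e`, together with a new vertex `x = Sum.inr ()`. -/
def CVert (G : DiGraph) (e : G.E) : Type :=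
  {u : G.V // u ≠ G.s e ∧ u ≠ G.t e} ⊕ Unit

instance (G : DiGraph) (e : G.E) : Fintype (CVert G e) := by
  unfold CVert; infer_instance

instance (G : DiGraph) (e : G.E) : DecidableEq (CVert G e) := by
  unfold CVert; infer_instance

/-- Source, in `G ⫽ e`, of the edge coming from the edge `f` of `G`
(for `e = (v,w)`, the new source is `x` iff `s f ∈ {v,w}` or `t f = w`). -/
def contrS (G : DiGraph) (e f : G.E) : CVert G e :=
  if h : G.s f = G.s e ∨ G.s f = G.t e ∨ G.t f = G.t e then Sum.inr ()
  else Sum.inl ⟨G.s f, by push_neg at h; exact ⟨h.1, h.2.1⟩⟩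

/-- Target, in `G ⫽ e`, of the edge coming from the edge `f` of `G`
(for `e = (v,w)`, the new target is `x` iff `t f ∈ {v,w}` or `s f = v`). -/
def contrT (G : DiGraph) (e f : G.E) : CVert G e :=
  if h : G.t f = G.s e ∨ G.t f = G.t e ∨ G.s f = G.s e then Sum.inr ()
  else Sum.inl ⟨G.t f, by push_neg at h; exact ⟨h.1, h.2.1⟩⟩

/-- The MP-contraction `G ⫽ e`. -/
def mpContract (G : DiGraph) (e : G.E) : DiGraph where
  V := CVert G e
  E := {f : G.E // f ≠ e}
  s := fun f => contrS G e f.val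
  t := fun f => contrT G e f.val

/-- The digraph `C̃_e(G)`: the MP-contraction `G ⫽ e` with all loops at the
new vertex `x` deleted. -/
def tildeC (G : DiGraph) (e : G.E) : DiGraph where
  V := CVert G e
  E := {f : G.E // f ≠ e ∧
         ¬(contrS G e f = Sum.inr () ∧ contrT G e f = Sum.inr ())}
  s := fun f => contrS G e f.val
  t := fun f => contrT G e f.val

/-- The classical contraction `G / e` of a non-loop edge `e = (v,w)`:
identify `w` with `v` and delete `e`. -/
def contractClassical (G : DiGraph) (e : G.E) (hne : G.s e ≠ G.t e) : DiGraph where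
  V := {u : G.V // u ≠ G.t e}
  E := {f : G.E // f ≠ e}
  s := fun f => if h : G.s f.val = G.t e then ⟨G.s e, hne⟩ else ⟨G.s f.val, h⟩
  t := fun f => if h : G.t f.val = G.t e then ⟨G.s e, hne⟩ else ⟨G.t f.val, h⟩

/-- A flowing k-colouring of `G`. -/
def IsFlowing (G : DiGraph) (k : ℕ) (c : G.V → Fin k) : Prop :=
  (∀ e : G.E, c (G.s e) ≠ c (G.t e)) ∧
  (∀ e f : G.E, G.t e = G.t f → c (G.s e) = c (G.s f)) ∧
  (∀ e f : G.E, G.s e = G.s f → c (G.t e) = c (G.t f))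

/-- The number of flowing k-colourings of `G`. -/
def tau (G : DiGraph) (k : ℕ) : ℕ :=
  Nat.card {c : G.V → Fin k // IsFlowing G k c}

/-- The spanning subgraph of `G` with edge set `S`. -/
def subgraphOn (G : DiGraph) (S : Finset G.E) : DiGraph where
  V := G.V
  E := {f : G.E // f ∈ S}
  s := fun f => G.s f.val
  t := fun f => G.t f.val

/-- The underlying undirected multigraph of `G` contains a cycle
(of length ≥ 1; a single loop, or two parallel/antiparallel edges, count). -/
def HasUndirCycle (G : DiGraph) : Prop :=
  ∃ (n : ℕ) (ed : Fin n → G.E) (vx : Fin n → G.V),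
    0 < n ∧ Function.Injective ed ∧ Function.Injective vx ∧
    ∀ i : Fin n,
      (G.s (ed i) = vx i ∧ G.t (ed i) = vx ⟨(i.val + 1) % n, Nat.mod_lt _ i.pos⟩) ∨
      (G.t (ed i) = vx i ∧ G.s (ed i) = vx ⟨(i.val + 1) % n, Nat.mod_lt _ i.pos⟩)

/-- The underlying undirected multigraph of `G` is a forest. -/
def IsForestD (G : DiGraph) : Prop := ¬HasUndirCycle G

/-- The underlying undirected multigraph of `G` is a tree. -/
def IsTreeD (G : DiGraph) : Prop := ConnectedD G ∧ IsForestD G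

/-- The multipath matroid of `G` is representable over the field `F`. -/
def RepOver (G : DiGraph) (F : Type) [Field F] : Prop :=
  ∃ (n : ℕ) (N : Matrix (Fin n) G.E F),
    ∀ m : Finset G.E, IsMultipath G m ↔
      LinearIndependent F (fun f : {x : G.E // x ∈ m} => N.transpose f.val)

end DiGraph

/-- A finite undirected multigraph. -/
structure Multigraph where
  V : Type
  E : Type
  [fintV : Fintype V]
  [decV : DecidableEq V]
  [fintE : Fintype E]
  [decE : DecidableEq E]
  ends : E → Sym2 V

attribute [instance] Multigraph.fintV Multigraph.decV Multigraph.fintE Multigraph.decE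

/-- The multigraph `M` has a cycle all of whose edges lie in `F`. -/
def Multigraph.HasCycleIn (M : Multigraph) (F : Finset M.E) : Prop :=
  ∃ (n : ℕ) (ed : Fin n → M.E) (vx : Fin n → M.V),
    0 < n ∧ Function.Injective ed ∧ Function.Injective vx ∧
    (∀ i : Fin n, ed i ∈ F) ∧
    ∀ i : Fin n, M.ends (ed i) = s(vx i, vx ⟨(i.val + 1) % n, Nat.mod_lt _ i.pos⟩)

/-! A non-multipath contains a loop, two edges with a common source or target, or a coherently
oriented cycle, and each of these is already dependent; so a circuit is one of them, and the
parallel-edge case is excluded by `EdgeUnique`. Conversely, no proper subset of a cycle `c`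
carries a coherent cycle: the successor map of such a subcycle agrees with `c.formPerm`, whose
powers reach every edge of `c`. -/

namespace DiGraph

variable {G : DiGraph}

def IsCircuit (G : DiGraph) (C : Finset G.E) : Prop :=
  ¬G.IsMultipath C ∧ ∀ C' : Finset G.E, C' ⊂ C → G.IsMultipath C'

theorem isCohCycle_singleton {e : G.E} (h : G.s e = G.t e) : G.IsCohCycle [e] :=
  ⟨List.cons_ne_nil _ _, List.nodup_singleton _, List.nodup_singleton _,
    fun i => by simp [Fin.fin_one_eq_zero i, h]⟩

theorem not_isMultipath_of_isCohCycle {c : List G.E} {m : Finset G.E} (hc : G.IsCohCycle c)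
    (hcm : ∀ g ∈ c, g ∈ m) : ¬G.IsMultipath m :=
  fun hm => hm.2.2.2 ⟨c, hc, hcm⟩

/-- The loop condition in `IsMultipath` is redundant: a loop is a coherent cycle. -/
theorem isMultipath_iff {m : Finset G.E} :
    G.IsMultipath m ↔ Set.InjOn G.s m ∧ Set.InjOn G.t m ∧
      ¬∃ c : List G.E, G.IsCohCycle c ∧ ∀ g ∈ c, g ∈ m := by
  refine ⟨fun ⟨_, hs, ht, hcyc⟩ => ⟨hs, ht, hcyc⟩,
    fun ⟨hs, ht, hcyc⟩ => ⟨?_, hs, ht, hcyc⟩⟩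
  intro e he hloop
  exact hcyc ⟨[e], isCohCycle_singleton hloop, by simpa using he⟩

namespace IsCohCycle

variable {c c' : List G.E}

theorem t_eq_s_formPerm (hc : G.IsCohCycle c) {g : G.E} (hg : g ∈ c) :
    G.t g = G.s (c.formPerm g) := by
  obtain ⟨i, rfl⟩ := List.mem_iff_get.mp hg
  simpa [List.formPerm_apply_getElem _ hc.2.1] using hc.2.2.2 i

theorem injOn_s (hc : G.IsCohCycle c) : Set.InjOn G.s {g | g ∈ c} :=
  List.inj_on_of_nodup_map hc.2.2.1

theorem injOn_t (hc : G.IsCohCycle c) : Set.InjOn G.t {g | g ∈ c} := by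
  intro g hg h hh hgh
  rw [hc.t_eq_s_formPerm hg, hc.t_eq_s_formPerm hh] at hgh
  exact c.formPerm.injective <| hc.injOn_s (List.formPerm_apply_mem_of_mem hg)
    (List.formPerm_apply_mem_of_mem hh) hgh

theorem formPerm_apply_mem_of_subset (hc : G.IsCohCycle c) (hc' : G.IsCohCycle c')
    (hsub : c' ⊆ c) {g : G.E} (hg : g ∈ c') : c.formPerm g ∈ c' := by
  have hnext : c'.formPerm g = c.formPerm g :=
    hc.injOn_s (hsub (List.formPerm_apply_mem_of_mem hg))
      (List.formPerm_apply_mem_of_mem (hsub hg))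
      (by rw [← hc'.t_eq_s_formPerm hg, hc.t_eq_s_formPerm (hsub hg)])
  exact hnext ▸ List.formPerm_apply_mem_of_mem hg

theorem subset_of_subset (hc : G.IsCohCycle c) (hc' : G.IsCohCycle c') (hsub : c' ⊆ c) :
    c ⊆ c' := by
  obtain ⟨g, hg⟩ := List.exists_mem_of_ne_nil c' hc'.1
  have hpow : ∀ n : ℕ, (c.formPerm ^ n) g ∈ c' := by
    intro n
    induction n with
    | zero => exact hg
    | succ n ih =>
      rw [pow_succ', Equiv.Perm.mul_apply]
      exact hc.formPerm_apply_mem_of_subset hc' hsub ih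
  obtain ⟨i, hi, rfl⟩ := List.getElem_of_mem (hsub hg)
  intro h hh
  obtain ⟨j, hj, rfl⟩ := List.getElem_of_mem hh
  have hij : (i + (c.length - i + j)) % c.length = j := by
    rw [show i + (c.length - i + j) = j + c.length by omega, Nat.add_mod_right,
      Nat.mod_eq_of_lt hj]
  simpa [List.formPerm_pow_apply_getElem _ hc.2.1, hij] using hpow (c.length - i + j)

end IsCohCycle

theorem isMultipath_of_card_le_one {m : Finset G.E} (hm : m.card ≤ 1)
    (hloop : ∀ e ∈ m, G.s e ≠ G.t e) : G.IsMultipath m := by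
  have heq : ∀ e ∈ m, ∀ f ∈ m, e = f := Finset.card_le_one.mp hm
  refine isMultipath_iff.mpr ⟨fun e he f hf _ => heq e he f hf,
    fun e he f hf _ => heq e he f hf, ?_⟩
  rintro ⟨c, hc, hcm⟩
  obtain ⟨g, hg⟩ := List.exists_mem_of_ne_nil c hc.1
  have hfix : c.formPerm g = g :=
    heq _ (hcm _ (List.formPerm_apply_mem_of_mem hg)) g (hcm g hg)
  exact hloop g (hcm g hg) (by rw [hc.t_eq_s_formPerm hg, hfix])

theorem isCircuit_pair {e f : G.E} (hef : e ≠ f) (he : G.s e ≠ G.t e) (hf : G.s f ≠ G.t f)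
    (hdep : ¬G.IsMultipath {e, f}) : G.IsCircuit {e, f} := by
  refine ⟨hdep, fun C' hC' => isMultipath_of_card_le_one ?_ ?_⟩
  · have := Finset.card_lt_card hC'
    rw [Finset.card_pair hef] at this
    omega
  · intro g hg
    rcases Finset.mem_insert.mp (hC'.1 hg) with rfl | hg'
    · exact he
    · rwa [Finset.mem_singleton.mp hg']

theorem IsCohCycle.isCircuit_toFinset {c : List G.E} (hc : G.IsCohCycle c) :
    G.IsCircuit c.toFinset := by
  refine ⟨not_isMultipath_of_isCohCycle hc fun g => List.mem_toFinset.mpr, fun C' hC' => ?_⟩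
  have hC'c : ∀ g ∈ C', g ∈ c := fun g hg => List.mem_toFinset.mp (hC'.1 hg)
  refine isMultipath_iff.mpr ⟨hc.injOn_s.mono hC'c, hc.injOn_t.mono hC'c, ?_⟩
  rintro ⟨c', hc', hc'C'⟩
  have hcc' := hc.subset_of_subset hc' fun g hg => hC'c g (hc'C' g hg)
  exact hC'.not_subset fun g hg => hc'C' g (hcc' (List.mem_toFinset.mp hg))

theorem IsLinearSinkSet.isCircuit {C : Finset G.E} (h : G.IsLinearSinkSet C) :
    G.IsCircuit C := by
  obtain ⟨e, f, hef, rfl, htt, -, he, hf⟩ := h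
  exact isCircuit_pair hef he hf fun hm => hef (hm.2.2.1 e (by simp) f (by simp) htt)

theorem IsLinearSourceSet.isCircuit {C : Finset G.E} (h : G.IsLinearSourceSet C) :
    G.IsCircuit C := by
  obtain ⟨e, f, hef, rfl, hss, -, he, hf⟩ := h
  exact isCircuit_pair hef he hf fun hm => hef (hm.2.1 e (by simp) f (by simp) hss)

namespace IsCircuit

variable {C : Finset G.E}

theorem eq_of_subset (hC : G.IsCircuit C) {D : Finset G.E} (hDC : D ⊆ C)
    (hD : ¬G.IsMultipath D) : D = C :=
  by_contra fun hne => hD (hC.2 D (hDC.ssubset_of_ne hne))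

theorem eq_pair (hC : G.IsCircuit C) {e f : G.E} (he : e ∈ C) (hf : f ∈ C) (hef : e ≠ f)
    (hdep : ¬G.IsMultipath {e, f}) :
    C = {e, f} ∧ G.s e ≠ G.t e ∧ G.s f ≠ G.t f := by
  have hCef : C = {e, f} := (hC.eq_of_subset (Finset.insert_subset he (by simpa)) hdep).symm
  have hloop : ∀ g ∈ C, G.s g ≠ G.t g := by
    intro g hg hgloop
    have hg1 : {g} = C :=
      hC.eq_of_subset (by simpa) (not_isMultipath_of_isCohCycle (isCohCycle_singleton hgloop)
        (by simp))
    have := congrArg Finset.card (hg1.trans hCef)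
    rw [Finset.card_singleton, Finset.card_pair hef] at this
    omega
  exact ⟨hCef, hloop e he, hloop f hf⟩

theorem isLinearSinkSet_or_isLinearSourceSet_or_isCohCycleSet (hU : G.EdgeUnique)
    (hC : G.IsCircuit C) :
    G.IsLinearSinkSet C ∨ G.IsLinearSourceSet C ∨ G.IsCohCycleSet C := by
  have hdep := hC.1
  rw [isMultipath_iff] at hdep
  by_cases hs : Set.InjOn G.s C
  · by_cases ht : Set.InjOn G.t C
    · obtain ⟨c, hc, hcC⟩ : ∃ c : List G.E, G.IsCohCycle c ∧ ∀ g ∈ c, g ∈ C :=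
        not_not.mp fun hcyc => hdep ⟨hs, ht, hcyc⟩
      refine Or.inr (Or.inr ⟨c, hc, (hC.eq_of_subset ?_ ?_).symm⟩)
      · exact fun g hg => hcC g (List.mem_toFinset.mp hg)
      · exact not_isMultipath_of_isCohCycle hc fun g => List.mem_toFinset.mpr
    · obtain ⟨e, he, f, hf, htt, hef⟩ :
          ∃ e ∈ C, ∃ f ∈ C, G.t e = G.t f ∧ e ≠ f := by
        simpa [Set.InjOn] using ht
      obtain ⟨rfl, hle, hlf⟩ :=
        hC.eq_pair he hf hef fun hm => hef (hm.2.2.1 e (by simp) f (by simp) htt)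
      exact Or.inl ⟨e, f, hef, rfl, htt, fun hss => hef (hU e f hss htt hle), hle, hlf⟩
  · obtain ⟨e, he, f, hf, hss, hef⟩ : ∃ e ∈ C, ∃ f ∈ C, G.s e = G.s f ∧ e ≠ f := by
      simpa [Set.InjOn] using hs
    obtain ⟨rfl, hle, hlf⟩ :=
      hC.eq_pair he hf hef fun hm => hef (hm.2.1 e (by simp) f (by simp) hss)
    exact Or.inr <| Or.inl
      ⟨e, f, hef, rfl, hss, fun htt => hef (hU e f hss htt hle), hle, hlf⟩

end IsCircuit

end DiGraph

open DiGraph in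
theorem circuits_of_multipath_matroid_general (G : DiGraph) (hU : G.EdgeUnique)
    (C : Finset G.E) :
    (¬G.IsMultipath C ∧ ∀ C' : Finset G.E, C' ⊂ C → G.IsMultipath C') ↔
      (IsLinearSinkSet G C ∨ IsLinearSourceSet G C ∨ IsCohCycleSet G C) := by
  refine ⟨IsCircuit.isLinearSinkSet_or_isLinearSourceSet_or_isCohCycleSet hU, ?_⟩
  rintro (h | h | ⟨c, hc, rfl⟩)
  exacts [h.isCircuit, h.isCircuit, hc.isCircuit_toFinset]

open DiGraph in
/-- If `(E(G), Mult(G))` is a matroid, then its circuits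
(minimal dependent sets) are exactly the edge sets of subgraphs of `G` which
are linear sinks, linear sources, or coherently oriented cycles (incl. loops). -/
theorem circuits_of_multipath_matroid (G : DiGraph) (hU : G.EdgeUnique)
    (hmat : IsIndepFamily (fun m : Finset G.E => G.IsMultipath m))
    (C : Finset G.E) :
    (¬G.IsMultipath C ∧ ∀ C' : Finset G.E, C' ⊂ C → G.IsMultipath C') ↔
      (IsLinearSinkSet G C ∨ IsLinearSourceSet G C ∨ IsCohCycleSet G C) :=
  circuits_of_multipath_matroid_general G hU C
end
end

section
/- Let G be a connected loopless MP-digraph that is not a coherently oriented cycle, and suppose that G has a unique dynamical module (equal to G itself). Then G is a sink or a source. -/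
set_option autoImplicit false

noncomputable section

attribute [local instance] Classical.propDecidable

/-!
By (MP2) a coherently oriented cycle would be a whole component, so `G` is acyclic. By (MP1),
for every edge `e` the in-star at its head is a union of out-stars or the out-star at its tail
is a union of in-stars, and such a star is a dynamical region. If some vertex `v` is unstable,
an edge into `v` and an edge out of `v` thus lie in dynamical regions which (MP1) forces to be
disjoint, so they contain different modules. Otherwise every vertex is stable, and the closed
star at the head (or tail) of any edge spreads through the connected digraph: `G` is that
in-star (or out-star).
-/

namespace DiGraph

variable {G : DiGraph}

def inStar (G : DiGraph) (v : G.V) : Finset G.E := Finset.univ.filter (G.t · = v)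

def outStar (G : DiGraph) (u : G.V) : Finset G.E := Finset.univ.filter (G.s · = u)

@[simp] lemma mem_inStar {v : G.V} {g : G.E} : g ∈ G.inStar v ↔ G.t g = v := by
  simp [inStar]

@[simp] lemma mem_outStar {u : G.V} {g : G.E} : g ∈ G.outStar u ↔ G.s g = u := by
  simp [outStar]

/-- The in-star at `v` is a union of out-stars. -/
def InStarClosed (G : DiGraph) (v : G.V) : Prop :=
  ∀ g h : G.E, G.t g = v → G.s h = G.s g → G.t h = v

def OutStarClosed (G : DiGraph) (u : G.V) : Prop :=
  ∀ g h : G.E, G.s g = u → G.t h = G.t g → G.s h = u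

def reverse (G : DiGraph) : DiGraph where
  V := G.V
  E := G.E
  s := G.t
  t := G.s

lemma Loopless.reverse (hll : G.Loopless) : G.reverse.Loopless := fun e => (hll e).symm

lemma EdgeUnique.reverse (hU : G.EdgeUnique) : G.reverse.EdgeUnique :=
  fun e f hs ht hne => hU e f ht hs hne.symm

lemma ConnectedD.reverse (hconn : G.ConnectedD) : G.reverse.ConnectedD :=
  ⟨hconn.1, fun v w => (hconn.2 v w).mono fun _ _ ⟨e, he⟩ => ⟨e, he.symm.imp And.symm And.symm⟩⟩

lemma not_hasPatternA_reverse (h : ¬G.HasPatternArev) : ¬G.reverse.HasPatternA :=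
  fun ⟨v₀, v₁, v₂, h₀₁, h₀₂, h₁₂, ⟨e, he⟩, ⟨f, hf⟩, ⟨g, hg⟩⟩ =>
    h ⟨v₀, v₁, v₂, h₀₁, h₀₂, h₁₂, ⟨e, he.symm⟩, ⟨f, hf.symm⟩, ⟨g, hg.symm⟩⟩

lemma not_hasPatternB_reverse (h : ¬G.HasPatternBrev) : ¬G.reverse.HasPatternB :=
  fun ⟨v₀, v₁, v₂, v₃, h₀₁, h₀₂, h₀₃, h₁₂, h₁₃, h₂₃, ⟨e, he⟩, ⟨f, hf⟩, ⟨g, hg⟩⟩ =>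
    h ⟨v₀, v₁, v₂, v₃, h₀₁, h₀₂, h₀₃, h₁₂, h₁₃, h₂₃, ⟨e, he.symm⟩, ⟨f, hf.symm⟩, ⟨g, hg.symm⟩⟩

lemma unstableG_reverse {z : G.V} : G.reverse.UnstableG z ↔ G.UnstableG z := And.comm

lemma IsSinkGraph.of_reverse (h : G.reverse.IsSinkGraph) : G.IsSourceGraph :=
  ⟨fun e => (h.1 e).symm, h.2⟩

lemma indegIn_eq_zero_iff {R : Finset G.E} {z : G.V} :
    G.indegIn R z = 0 ↔ ∀ g ∈ R, G.t g ≠ z := by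
  simp [indegIn, Finset.filter_eq_empty_iff]

lemma outdegIn_eq_zero_iff {R : Finset G.E} {z : G.V} :
    G.outdegIn R z = 0 ↔ ∀ g ∈ R, G.s g ≠ z := by
  simp [outdegIn, Finset.filter_eq_empty_iff]

lemma unstableG_iff {z : G.V} : G.UnstableG z ↔ (∃ g, G.t g = z) ∧ ∃ g, G.s g = z := by
  simp [UnstableG, indeg, outdeg, indegIn, outdegIn, Finset.card_pos, Finset.Nonempty]

lemma ConnectedD.forall_of_adj (hconn : G.ConnectedD) {P : G.V → Prop}
    (hstep : ∀ z w, G.adj z w → P z → P w) {a : G.V} (ha : P a) (z : G.V) : P z := by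
  suffices ∀ x y, G.connRel x y → (P x ↔ P y) from (this a z (hconn.2 a z)).mp ha
  intro x y hxy
  induction hxy with
  | rel x y h => exact ⟨hstep x y h, hstep y x (let ⟨e, he⟩ := h; ⟨e, he.symm⟩)⟩
  | refl => exact Iff.rfl
  | symm _ _ _ ih => exact ih.symm
  | trans _ _ _ _ _ ih₁ ih₂ => exact ih₁.trans ih₂

lemma IsCohCycle.exists_src_eq_tgt {c : List G.E} (hc : G.IsCohCycle c) {h : G.E}
    (hh : h ∈ c) : ∃ g ∈ c, G.s g = G.t h := by
  obtain ⟨i, rfl⟩ := List.mem_iff_get.mp hh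
  exact ⟨_, List.get_mem _ _, (hc.2.2.2 i).symm⟩

lemma IsCohCycle.two_le_length (hll : G.Loopless) {c : List G.E} (hc : G.IsCohCycle c) :
    2 ≤ c.length := by
  obtain ⟨hne, -, -, hnext⟩ := hc
  have hpos : 0 < c.length := List.length_pos_iff.mpr hne
  by_contra! hlt
  obtain ⟨j, hj⟩ : ∃ j : Fin c.length, G.t (c.get ⟨0, hpos⟩) = G.s (c.get j) :=
    ⟨_, hnext ⟨0, hpos⟩⟩
  obtain rfl : j = ⟨0, hpos⟩ := Fin.ext (by omega)
  exact hll _ hj.symm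

/-- By (MP2) a cycle is a whole component, so in a connected digraph it would be all of `G`. -/
lemma not_isCohCycle (hMP2 : G.MP2) (hconn : G.ConnectedD) (hll : G.Loopless)
    (hnc : ¬G.IsCohCycleGraph) (c : List G.E) : ¬G.IsCohCycle c := by
  intro hc
  have hcomp := hMP2 c hc (hc.two_le_length hll)
  have hstep : ∀ z w, G.adj z w → (∃ g ∈ c, G.s g = z) → ∃ g ∈ c, G.s g = w := by
    rintro z w ⟨h, hh⟩ ⟨g, hg, rfl⟩
    have hhc : h ∈ c := hcomp h ⟨g, hg, hh.imp (·.1.symm) (·.2.symm)⟩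
    rcases hh with ⟨-, rfl⟩ | ⟨rfl, -⟩
    · exact hc.exists_src_eq_tgt hhc
    · exact ⟨h, hhc, rfl⟩
  obtain ⟨g₀, hg₀⟩ := List.exists_mem_of_ne_nil c hc.1
  have hall := hconn.forall_of_adj hstep ⟨g₀, hg₀, rfl⟩
  refine hnc ⟨c, hc, fun e => ?_, hall⟩
  obtain ⟨g, hg, hgs⟩ := hall (G.s e)
  exact hcomp e ⟨g, hg, Or.inl hgs⟩

lemma isCohCycle_pair {e f : G.E} (hef : G.t e = G.s f) (hfe : G.t f = G.s e)
    (hne : G.s e ≠ G.s f) : G.IsCohCycle [e, f] := by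
  have : e ≠ f := fun h => hne (h ▸ rfl)
  refine ⟨by simp, by simp [this], by simp [hne], fun i => ?_⟩
  fin_cases i
  · simpa using hef
  · simpa using hfe

lemma isDynRegion_of_acyclic (hacyc : ∀ c, ¬G.IsCohCycle c) {R : Finset G.E}
    (hne : R.Nonempty) (hconn : G.EdgeConnected R)
    (hbd : ∀ z, G.IncidentTo R z → G.IncidentTo (Finset.univ \ R) z →
      ((∀ g ∈ R, G.t g ≠ z) ∧ ∀ g ∉ R, G.s g ≠ z) ∨
        ((∀ g ∈ R, G.s g ≠ z) ∧ ∀ g ∉ R, G.t g ≠ z)) :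
    G.IsDynRegion R := by
  refine ⟨hne, hconn, fun z hR hC => ?_, fun c hc => absurd hc (hacyc c)⟩
  obtain ⟨g, hgR, hg⟩ := hR
  obtain ⟨h, hhC, hh⟩ := hC
  have hhR : h ∉ R := (Finset.mem_sdiff.mp hhC).2
  have hnotR : ∀ {p : G.E → Prop}, (∀ f ∉ R, p f) → ∀ f ∈ Finset.univ \ R, p f :=
    fun hp f hf => hp f (Finset.mem_sdiff.mp hf).2
  rcases hbd z ⟨g, hgR, hg⟩ ⟨h, hhC, hh⟩ with ⟨hRt, hCs⟩ | ⟨hRs, hCt⟩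
  · refine ⟨unstableG_iff.2 ⟨⟨h, hh.resolve_left (hCs h hhR)⟩, ⟨g, hg.resolve_right (hRt g hgR)⟩⟩,
      Or.inl (indegIn_eq_zero_iff.2 hRt), Or.inr (outdegIn_eq_zero_iff.2 (hnotR hCs))⟩
  · refine ⟨unstableG_iff.2 ⟨⟨g, hg.resolve_left (hRs g hgR)⟩, ⟨h, hh.resolve_right (hCt h hhR)⟩⟩,
      Or.inr (outdegIn_eq_zero_iff.2 hRs), Or.inl (indegIn_eq_zero_iff.2 (hnotR hCt))⟩

lemma isDynRegion_inStar (hll : G.Loopless) (hacyc : ∀ c, ¬G.IsCohCycle c) {e : G.E}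
    (hcl : G.InStarClosed (G.t e)) : G.IsDynRegion (G.inStar (G.t e)) := by
  refine isDynRegion_of_acyclic hacyc ⟨e, mem_inStar.2 rfl⟩ ?_ fun z ⟨k, hk, hkz⟩ _ => ?_
  · intro g hg f hf
    have hadj : ∀ x ∈ G.inStar (G.t e), G.adjIn (G.inStar (G.t e)) (G.s x) (G.t e) :=
      fun x hx => ⟨x, hx, Or.inl ⟨rfl, mem_inStar.1 hx⟩⟩
    exact .trans _ _ _ (.rel _ _ (hadj g hg)) (.symm _ _ (.rel _ _ (hadj f hf)))
  by_cases hz : z = G.t e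
  · subst hz
    exact Or.inr ⟨fun g hg hs => hll g (hs.trans (mem_inStar.1 hg).symm),
      fun g hg ht => hg (mem_inStar.2 ht)⟩
  · have hks : G.s k = z := hkz.resolve_right fun h => hz (h.symm.trans (mem_inStar.1 hk))
    exact Or.inl ⟨fun g hg ht => hz (ht.symm.trans (mem_inStar.1 hg)),
      fun g hg hs => hg (mem_inStar.2 (hcl k g (mem_inStar.1 hk) (hs.trans hks.symm)))⟩

lemma isDynRegion_outStar (hll : G.Loopless) (hacyc : ∀ c, ¬G.IsCohCycle c) {e : G.E}
    (hcl : G.OutStarClosed (G.s e)) : G.IsDynRegion (G.outStar (G.s e)) := by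
  refine isDynRegion_of_acyclic hacyc ⟨e, mem_outStar.2 rfl⟩ ?_ fun z ⟨k, hk, hkz⟩ _ => ?_
  · intro g hg f hf
    rw [mem_outStar.1 hg, mem_outStar.1 hf]
    exact .refl _
  by_cases hz : z = G.s e
  · subst hz
    exact Or.inl ⟨fun g hg ht => hll g ((mem_outStar.1 hg).trans ht.symm),
      fun g hg hs => hg (mem_outStar.2 hs)⟩
  · have hkt : G.t k = z := hkz.resolve_left fun h => hz (h.symm.trans (mem_outStar.1 hk))
    exact Or.inr ⟨fun g hg hs => hz (hs.symm.trans (mem_outStar.1 hg)),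
      fun g hg ht => hg (mem_outStar.2 (hcl k g (mem_outStar.1 hk) (ht.trans hkt.symm)))⟩

/-- An edge from the tail of one of two edges into `v` to a vertex other than `v` would complete
them to pattern (A) or pattern (B). -/
lemma inStarClosed_of_ne (hA : ¬G.HasPatternA) (hB : ¬G.HasPatternB) (hU : G.EdgeUnique)
    (hll : G.Loopless) {e e' : G.E} (hne : e ≠ e') (ht : G.t e = G.t e') :
    G.InStarClosed (G.t e) := by
  intro g h hg hsh
  by_contra hb
  have hss : G.s e ≠ G.s e' := fun hs => hne (hU e e' hs ht (hll e))
  obtain ⟨k, hk, hky⟩ : ∃ k, G.t k = G.t e ∧ G.s k ≠ G.s g := by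
    by_cases hex : G.s e = G.s g
    · exact ⟨e', ht.symm, fun hh => hss (hex.trans hh.symm)⟩
    · exact ⟨e, rfl, hex⟩
  have hgv : G.s g ≠ G.t e := fun hh => hll g (hh.trans hg.symm)
  have hkv : G.s k ≠ G.t e := fun hh => hll k (hh.trans hk.symm)
  have hgh : G.s g ≠ G.t h := fun hh => hll h (hsh.trans hh)
  by_cases hhk : G.t h = G.s k
  · exact hA ⟨G.t h, G.s g, G.t e, Ne.symm hgh, hb, hgv,
      ⟨h, hsh, rfl⟩, ⟨k, hhk.symm, hk⟩, ⟨g, rfl, hg⟩⟩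
  · exact hB ⟨G.s k, G.t e, G.s g, G.t h, hkv, hky, fun hh => hhk hh.symm,
      Ne.symm hgv, Ne.symm hb, hgh, ⟨k, rfl, hk⟩, ⟨g, rfl, hg⟩, ⟨h, hsh, rfl⟩⟩

lemma outStarClosed_of_ne (hArev : ¬G.HasPatternArev) (hBrev : ¬G.HasPatternBrev)
    (hU : G.EdgeUnique) (hll : G.Loopless) {e e' : G.E} (hne : e ≠ e') (hs : G.s e = G.s e') :
    G.OutStarClosed (G.s e) :=
  inStarClosed_of_ne (G := G.reverse) (not_hasPatternA_reverse hArev)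
    (not_hasPatternB_reverse hBrev) hU.reverse hll.reverse hne hs

lemma inStarClosed_or_outStarClosed (hMP1 : G.MP1) (hU : G.EdgeUnique) (hll : G.Loopless)
    (e : G.E) : G.InStarClosed (G.t e) ∨ G.OutStarClosed (G.s e) := by
  obtain ⟨hA, hArev, hB, hBrev⟩ := hMP1
  by_cases hin : ∃ e', e' ≠ e ∧ G.t e' = G.t e
  · obtain ⟨e', hne, ht⟩ := hin
    exact Or.inl (inStarClosed_of_ne hA hB hU hll hne.symm ht.symm)
  by_cases hout : ∃ e', e' ≠ e ∧ G.s e' = G.s e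
  · obtain ⟨e', hne, hs⟩ := hout
    exact Or.inr (outStarClosed_of_ne hArev hBrev hU hll hne.symm hs.symm)
  refine Or.inl fun g h hg hsh => ?_
  obtain rfl : g = e := of_not_not fun hne => hin ⟨g, hne, hg⟩
  obtain rfl : h = g := of_not_not fun hne => hout ⟨h, hne, hsh⟩
  exact hg

lemma exists_dynRegion_subset_star (hll : G.Loopless) (hacyc : ∀ c, ¬G.IsCohCycle c)
    {e : G.E} (hcl : G.InStarClosed (G.t e) ∨ G.OutStarClosed (G.s e)) :
    ∃ R, G.IsDynRegion R ∧ ∀ g ∈ R, G.t g = G.t e ∨ G.s g = G.s e := by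
  rcases hcl with hin | hout
  · exact ⟨_, isDynRegion_inStar hll hacyc hin, fun g hg => Or.inl (mem_inStar.1 hg)⟩
  · exact ⟨_, isDynRegion_outStar hll hacyc hout, fun g hg => Or.inr (mem_outStar.1 hg)⟩

/-- Up to loops, such a `g` either closes the `2`-cycle `e, f` or completes `e, f` to
pattern (A). -/
lemma star_disjoint (hA : ¬G.HasPatternA) (hll : G.Loopless) (hacyc : ∀ c, ¬G.IsCohCycle c)
    {e f g : G.E} (hef : G.t e = G.s f) (hge : G.t g = G.t e ∨ G.s g = G.s e)
    (hgf : G.t g = G.t f ∨ G.s g = G.s f) : False := by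
  rcases hge with hge | hge <;> rcases hgf with hgf | hgf
  · exact hll f (hef.symm.trans (hge.symm.trans hgf))
  · exact hll g (hgf.trans (hef.symm.trans hge.symm))
  · by_cases hfe : G.s e = G.t f
    · exact hacyc [e, f] (isCohCycle_pair hef hfe.symm fun h => hll e (h.trans hef.symm))
    · exact hA ⟨G.t e, G.s e, G.t f, (hll e).symm, hef ▸ hll f, hfe,
        ⟨e, rfl, rfl⟩, ⟨f, hef.symm, rfl⟩, ⟨g, hge, hgf⟩⟩
  · exact hll e (hge.symm.trans (hgf.trans hef.symm))

lemma exists_dynModule_subset {R : Finset G.E} (hR : G.IsDynRegion R) :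
    ∃ M ⊆ R, G.IsDynModule M := by
  obtain ⟨M, hMR, hM, hmin⟩ := exists_minimal_le_of_wellFoundedLT _ R hR
  exact ⟨M, hMR, hM, fun R' hR'M hR' => le_antisymm hR'M (hmin hR' hR'M)⟩

/-- The tail of every edge into `a` has an edge into `a`, hence no in-edge, and by closedness
all its out-edges end at `a`; so by connectedness every edge ends at `a`. -/
lemma isSinkGraph_of_inStarClosed (hU : G.EdgeUnique) (hll : G.Loopless)
    (hconn : G.ConnectedD) (hst : ∀ z, ¬G.UnstableG z) {a : G.V} (ha : ∀ g, G.s g ≠ a)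
    (hcl : G.InStarClosed a) : G.IsSinkGraph := by
  have hto : ∀ z g, (G.s g = z ∨ G.t g = z) → G.t g = a := by
    refine hconn.forall_of_adj (a := a) ?_ fun g hg => hg.resolve_left (ha g)
    rintro z w ⟨k, hk⟩ hz g hg
    have hka : G.t k = a := hz k (hk.imp And.left And.right)
    rcases hk with ⟨-, rfl⟩ | ⟨rfl, -⟩
    · rw [hka] at hg
      exact hg.resolve_left (ha g)
    · exact hcl k g hka (hg.resolve_right fun ht => hst _ (unstableG_iff.2 ⟨⟨g, ht⟩, ⟨k, rfl⟩⟩))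
  have hsrc : ∀ z, z ≠ a → ∃ g, G.s g = z := by
    have hinc := hconn.forall_of_adj (P := fun z => z = a ∨ ∃ g, G.s g = z ∨ G.t g = z)
      (fun _ _ ⟨k, hk⟩ _ => Or.inr ⟨k, hk.symm.imp And.left And.right⟩) (Or.inl rfl)
    intro z hz
    obtain ⟨g, hg⟩ := (hinc z).resolve_left hz
    exact ⟨g, hg.resolve_right fun ht => hz (ht ▸ hto z g (Or.inr ht))⟩
  have hbij : Function.Bijective fun g => (⟨G.s g, ha g⟩ : {z // z ≠ a}) :=
    ⟨fun g g' h => hU g g' (Subtype.ext_iff.1 h)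
      ((hto _ g (Or.inl rfl)).trans (hto _ g' (Or.inl rfl)).symm) (hll g),
     fun ⟨z, hz⟩ => (hsrc z hz).imp fun g hg => Subtype.ext hg⟩
  have hcard := Fintype.card_of_bijective hbij
  rw [Fintype.card_subtype_compl, Fintype.card_subtype_eq] at hcard
  have hpos : 0 < Fintype.card G.V := Fintype.card_pos_iff.mpr ⟨a⟩
  refine ⟨hll, by omega, a, fun g => hto _ g (Or.inl rfl), fun v hv => of_not_not fun hva => ?_⟩
  obtain ⟨g, hg⟩ := hsrc v hva
  exact hll g (hg.trans (hv g).symm)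

lemma isSourceGraph_of_outStarClosed (hU : G.EdgeUnique) (hll : G.Loopless)
    (hconn : G.ConnectedD) (hst : ∀ z, ¬G.UnstableG z) {a : G.V} (ha : ∀ g, G.t g ≠ a)
    (hcl : G.OutStarClosed a) : G.IsSourceGraph :=
  IsSinkGraph.of_reverse <| isSinkGraph_of_inStarClosed (G := G.reverse) hU.reverse hll.reverse
    hconn.reverse (fun z => unstableG_reverse.not.2 (hst z)) ha hcl

lemma not_unstableG_of_existsUnique_dynModule (hMP1 : G.MP1) (hU : G.EdgeUnique)
    (hll : G.Loopless) (hacyc : ∀ c, ¬G.IsCohCycle c) (hmod : ∃! R, G.IsDynModule R)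
    (v : G.V) : ¬G.UnstableG v := by
  rw [unstableG_iff]
  rintro ⟨⟨e, rfl⟩, ⟨f, hf⟩⟩
  have hstar := inStarClosed_or_outStarClosed hMP1 hU hll
  obtain ⟨R₁, hR₁, hR₁e⟩ := exists_dynRegion_subset_star hll hacyc (hstar e)
  obtain ⟨R₂, hR₂, hR₂f⟩ := exists_dynRegion_subset_star hll hacyc (hstar f)
  obtain ⟨M₁, hM₁R, hM₁⟩ := exists_dynModule_subset hR₁
  obtain ⟨M₂, hM₂R, hM₂⟩ := exists_dynModule_subset hR₂
  obtain ⟨g, hg⟩ := hM₁.1.1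
  have hM : M₁ = M₂ := hmod.unique hM₁ hM₂
  exact star_disjoint hMP1.1 hll hacyc hf.symm (hR₁e g (hM₁R hg)) (hR₂f g (hM₂R (hM ▸ hg)))

lemma isSinkGraph_or_isSourceGraph_of_forall_not_unstableG (hMP1 : G.MP1) (hU : G.EdgeUnique)
    (hll : G.Loopless) (hconn : G.ConnectedD) (hst : ∀ z, ¬G.UnstableG z) :
    G.IsSinkGraph ∨ G.IsSourceGraph := by
  have hhead : ∀ e g, G.s g ≠ G.t e := fun e g hg =>
    hst _ (unstableG_iff.2 ⟨⟨e, rfl⟩, ⟨g, hg⟩⟩)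
  rcases isEmpty_or_nonempty G.E with hE | ⟨⟨e⟩⟩
  · obtain ⟨a⟩ := hconn.1
    exact Or.inl (isSinkGraph_of_inStarClosed hU hll hconn hst (a := a) isEmptyElim isEmptyElim)
  rcases inStarClosed_or_outStarClosed hMP1 hU hll e with hin | hout
  · exact Or.inl (isSinkGraph_of_inStarClosed hU hll hconn hst (hhead e) hin)
  · exact Or.inr (isSourceGraph_of_outStarClosed hU hll hconn hst
      (fun g hg => hhead g e hg.symm) hout)

end DiGraph

/-- A connected loopless MP-digraph which is not a coherently
oriented cycle and has a unique dynamical module is a sink or a source. -/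
theorem unique_module_sink_or_source (G : DiGraph) (hU : G.EdgeUnique)
    (hMP : G.IsMPDigraph) (hconn : G.ConnectedD) (hll : G.Loopless)
    (hnc : ¬G.IsCohCycleGraph)
    (hmod : ∃! R : Finset G.E, DiGraph.IsDynModule G R) :
    G.IsSinkGraph ∨ G.IsSourceGraph :=
  have hacyc := DiGraph.not_isCohCycle hMP.2 hconn hll hnc
  DiGraph.isSinkGraph_or_isSourceGraph_of_forall_not_unstableG hMP.1 hU hll hconn
    (DiGraph.not_unstableG_of_existsUnique_dynModule hMP.1 hU hll hacyc hmod)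
end
end
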